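/- For every integer n ≥ 5, the restricted edge-connectivity of the direct product K₂ × K_n equals 2(n − 2). -/

import Mathlib

open SimpleGraph

/-- The direct (tensor/Kronecker) product of two simple graphs:
`(u₁, v₁)` and `(u₂, v₂)` are adjacent iff `u₁u₂ ∈ E(G)` and `v₁v₂ ∈ E(H)`. -/
def tensorProd {α β : Type*} (G : SimpleGraph α) (H : SimpleGraph β) :
    SimpleGraph (α × β) where
  Adj x y := G.Adj x.1 y.1 ∧ H.Adj x.2 y.2
  symm := ⟨fun _ _ h => ⟨h.1.symm, h.2.symm⟩⟩
  loopless := ⟨fun _ h => G.loopless.irrefl _ h.1⟩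

/-- The direct product `G × Tₙ` of a simple graph `G` with the total graph `Tₙ`
(the complete graph `Kₙ` with a loop added at every vertex):  since `Tₙ` has all
possible edges and loops, `(u₁, v₁)` is adjacent to `(u₂, v₂)` iff `u₁u₂ ∈ E(G)`. -/
def totalProd {α : Type*} (G : SimpleGraph α) (n : ℕ) :
    SimpleGraph (α × Fin n) where
  Adj x y := G.Adj x.1 y.1
  symm := ⟨fun _ _ h => h.symm⟩
  loopless := ⟨fun _ h => G.loopless.irrefl _ h⟩

/-- The direct product `K₂ × Kₙ`. -/
def K2timesKn (n : ℕ) : SimpleGraph (Fin 2 × Fin n) :=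
  tensorProd (completeGraph (Fin 2)) (completeGraph (Fin n))

/-- The direct product `K₂ × Tₙ` (isomorphic to the complete bipartite graph `K_{n,n}`). -/
def K2timesTn (n : ℕ) : SimpleGraph (Fin 2 × Fin n) :=
  totalProd (completeGraph (Fin 2)) n

/-- `[A, V ∖ A]` : the set of edges of `G` with exactly one endpoint in `A`. -/
def cutEdges {α : Type*} (G : SimpleGraph α) (A : Set α) : Set (Sym2 α) :=
  {e | e ∈ G.edgeSet ∧ ∃ u v, e = s(u, v) ∧ u ∈ A ∧ v ∉ A}

/-- `F` is an edge-cut of `G`: a set of edges whose deletion disconnects `G`. -/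
def IsEdgeCut {α : Type*} (G : SimpleGraph α) (F : Set (Sym2 α)) : Prop :=
  F ⊆ G.edgeSet ∧ ¬ (G.deleteEdges F).Connected

/-- The edge-connectivity `λ(G)`: the minimum cardinality of an edge-cut. -/
noncomputable def edgeConn {α : Type*} (G : SimpleGraph α) : ℕ :=
  sInf {k | ∃ F : Finset (Sym2 α), IsEdgeCut G ↑F ∧ F.card = k}

/-- `G` is super edge-connected (super-λ): every minimum edge-cut is exactly the
set of edges incident with some vertex. -/
def SuperEdgeConnected {α : Type*} (G : SimpleGraph α) : Prop :=
  ∀ F : Finset (Sym2 α), IsEdgeCut G ↑F → F.card = edgeConn G →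
    ∃ v, (F : Set (Sym2 α)) = G.incidenceSet v

/-- `F` is a restricted edge-cut of `G`: its deletion disconnects `G` and every
connected component of `G − F` has at least two vertices. -/
def IsRestrictedEdgeCut {α : Type*} (G : SimpleGraph α) (F : Set (Sym2 α)) : Prop :=
  F ⊆ G.edgeSet ∧ ¬ (G.deleteEdges F).Connected ∧
    ∀ c : (G.deleteEdges F).ConnectedComponent, c.supp.Nontrivial

/-- The restricted edge-connectivity `λ'(G) : ℕ∞`: the minimum cardinality of a
restricted edge-cut, and `+∞` (`⊤`) if no restricted edge-cut exists. -/
noncomputable def restrictedEdgeConn {α : Type*} (G : SimpleGraph α) : ℕ∞ :=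
  sInf {k : ℕ∞ | ∃ F : Finset (Sym2 α), IsRestrictedEdgeCut G ↑F ∧ (F.card : ℕ∞) = k}

/-- `G` is super restricted edge-connected (super-λ'): every minimum restricted
edge-cut isolates an edge, i.e. some component of `G − F` is a single edge. -/
def SuperRestrictedEdgeConnected {α : Type*} (G : SimpleGraph α) : Prop :=
  ∀ F : Finset (Sym2 α), IsRestrictedEdgeCut G ↑F →
    (F.card : ℕ∞) = restrictedEdgeConn G →
    ∃ u v, (G.deleteEdges ↑F).Adj u v ∧
      ((G.deleteEdges ↑F).connectedComponentMk u).supp = {u, v}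

/-- The minimum edge-degree `ξ(G) = min { d(u) + d(v) − 2 : uv ∈ E(G) }`. -/
noncomputable def minEdgeDegree {α : Type*} (G : SimpleGraph α) : ℕ :=
  sInf {k | ∃ u v, G.Adj u v ∧ (G.neighborSet u).ncard + (G.neighborSet v).ncard - 2 = k}

/-
A restricted edge-cut `F` of a finite graph contains every edge leaving some vertex set `A` with
`2 ≤ |A| ≤ |V| / 2`: take the vertex set of a component of `G - F` or its complement. In
`K₂ × Kₙ` let `A` have `a` vertices in the first copy of `Kₙ` and `b` in the second. A vertex of
`A` in the first copy is adjacent to every vertex of the second copy except its twin, so it has at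
least `n - b - 1` neighbours outside `A`; symmetrically for the second copy. Hence
`|F| ≥ a (n - b - 1) + b (n - a - 1) ≥ 2 (n - 2)` whenever `2 ≤ a + b ≤ n` and `n ≥ 4`.
The bound is attained by the edges leaving an edge `{(0, i), (1, j)}`: as `n ≥ 4`, every other
vertex keeps a neighbour outside this edge.
-/

open Finset

section CutEdges

variable {V : Type*} {G : SimpleGraph V}

lemma mem_cutEdges_iff {A : Set V} {u v : V} :
    s(u, v) ∈ cutEdges G A ↔ G.Adj u v ∧ (u ∈ A ↔ v ∉ A) := by
  simp only [cutEdges, Set.mem_ofPred_eq, mem_edgeSet, Sym2.eq_iff]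
  constructor
  · rintro ⟨hadj, x, y, ⟨rfl, rfl⟩ | ⟨rfl, rfl⟩, hx, hy⟩ <;> tauto
  · rintro ⟨hadj, h⟩
    refine ⟨hadj, ?_⟩
    by_cases hu : u ∈ A
    · exact ⟨u, v, Or.inl ⟨rfl, rfl⟩, hu, h.1 hu⟩
    · exact ⟨v, u, Or.inr ⟨rfl, rfl⟩, by tauto, hu⟩

lemma cutEdges_compl (A : Set V) : cutEdges G Aᶜ = cutEdges G A := by
  ext e
  induction e using Sym2.ind with
  | _ u v => simp only [mem_cutEdges_iff, Set.mem_compl_iff]; tauto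

lemma cutEdges_supp_subset (F : Set (Sym2 V)) (C : (G.deleteEdges F).ConnectedComponent) :
    cutEdges G C.supp ⊆ F := by
  rintro e ⟨he, u, v, rfl, hu, hv⟩
  by_contra hF
  have hadj : (G.deleteEdges F).Adj u v := (deleteEdges_adj ..).2 ⟨he, hF⟩
  rw [ConnectedComponent.mem_supp_iff] at hu hv
  exact hv (ConnectedComponent.connectedComponentMk_eq_of_adj hadj.symm ▸ hu)

lemma ncard_cutEdges [Fintype V] [DecidableEq V] [DecidableRel G.Adj] (A : Finset V) :
    (cutEdges G ↑A).ncard = ∑ u ∈ A, #(Aᶜ.filter (G.Adj u)) := by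
  have himage : cutEdges G ↑A =
      ↑((A.sigma fun u => Aᶜ.filter (G.Adj u)).image fun p => s(p.1, p.2)) := by
    ext e
    induction e using Sym2.ind with
    | _ u v =>
      simp only [mem_cutEdges_iff, coe_image, Set.mem_image, mem_coe, mem_sigma, mem_filter,
        mem_compl, Sigma.exists, Sym2.eq_iff]
      constructor
      · rintro ⟨hadj, h⟩
        by_cases hu : u ∈ A
        · exact ⟨u, v, ⟨hu, h.1 hu, hadj⟩, Or.inl ⟨rfl, rfl⟩⟩
        · exact ⟨v, u, ⟨by tauto, hu, hadj.symm⟩, Or.inr ⟨rfl, rfl⟩⟩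
      · rintro ⟨x, y, ⟨hx, hy, hadj⟩, ⟨rfl, rfl⟩ | ⟨rfl, rfl⟩⟩
        · exact ⟨hadj, by tauto⟩
        · exact ⟨hadj.symm, by tauto⟩
  rw [himage, Set.ncard_coe_finset, card_image_of_injOn, card_sigma]
  rintro ⟨u, v⟩ huv ⟨u', v'⟩ huv' h
  simp only [coe_sigma, Set.mem_sigma_iff, mem_coe, mem_filter, mem_compl] at huv huv'
  simp only [Sym2.eq_iff] at h
  rcases h with ⟨rfl, rfl⟩ | ⟨rfl, rfl⟩
  · rfl
  · exact absurd huv.1 huv'.2.1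

lemma IsRestrictedEdgeCut.exists_small_side [Fintype V] [Nonempty V] {F : Set (Sym2 V)}
    (hF : IsRestrictedEdgeCut G F) :
    ∃ A : Finset V, 2 ≤ #A ∧ 2 * #A ≤ Fintype.card V ∧ cutEdges G ↑A ⊆ F := by
  classical
  obtain ⟨-, hdisc, hcomp⟩ := hF
  obtain ⟨x, y, hxy⟩ : ∃ x y, ¬ (G.deleteEdges F).Reachable x y := by
    simpa [connected_iff, Preconnected] using hdisc
  set C := (G.deleteEdges F).connectedComponentMk x
  set D := (G.deleteEdges F).connectedComponentMk y
  set A := C.supp.toFinset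
  have hA : 2 ≤ #A := one_lt_card_iff_nontrivial.2 (Set.toFinset_nontrivial.2 (hcomp C))
  have hAc : 2 ≤ #Aᶜ := by
    refine (one_lt_card_iff_nontrivial.2 (Set.toFinset_nontrivial.2 (hcomp D))).trans_le
      (card_le_card ?_)
    intro v hv
    simp only [Set.mem_toFinset, ConnectedComponent.mem_supp_iff, mem_compl, A] at hv ⊢
    exact fun hvx => hxy (ConnectedComponent.exact (hvx.symm.trans hv))
  have hcut : cutEdges G ↑A ⊆ F := by
    rw [Set.coe_toFinset]
    exact cutEdges_supp_subset F C
  rcases le_total #A #Aᶜ with h | h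
  · exact ⟨A, hA, by rw [card_compl] at h; omega, hcut⟩
  · refine ⟨Aᶜ, hAc, by rw [card_compl] at h ⊢; omega, ?_⟩
    rwa [coe_compl, cutEdges_compl]

lemma isRestrictedEdgeCut_cutEdges {A : Set V} {u w : V} (hu : u ∈ A) (hw : w ∉ A)
    (hside : ∀ x, ∃ y, G.Adj x y ∧ (x ∈ A ↔ y ∈ A)) :
    IsRestrictedEdgeCut G (cutEdges G A) := by
  refine ⟨fun e he => he.1, fun hconn => ?_, fun C => ?_⟩
  · obtain ⟨p⟩ := hconn.preconnected u w
    obtain ⟨d, -, hd₁, hd₂⟩ := p.exists_boundary_dart A hu hw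
    obtain ⟨hadj, hnot⟩ := (deleteEdges_adj ..).1 d.adj
    exact hnot (mem_cutEdges_iff.2 ⟨hadj, by tauto⟩)
  · obtain ⟨x, rfl⟩ := C.exists_rep
    obtain ⟨y, hxy, hy⟩ := hside x
    have hxy' : (G.deleteEdges (cutEdges G A)).Adj x y :=
      (deleteEdges_adj ..).2 ⟨hxy, fun h => by have := (mem_cutEdges_iff.1 h).2; tauto⟩
    exact ⟨x, rfl, y, (ConnectedComponent.connectedComponentMk_eq_of_adj hxy').symm, hxy.ne⟩

end CutEdges

lemma two_mul_sub_two_le {n a b : ℕ} (hn : 4 ≤ n) (h2 : 2 ≤ a + b) (hab : a + b ≤ n) :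
    2 * (n - 2) ≤ a * (n - b - 1) + b * (n - a - 1) := by
  rcases Nat.eq_zero_or_pos a with rfl | ha
  · simpa using Nat.mul_le_mul (show 2 ≤ b by omega) (show n - 2 ≤ n - 1 by omega)
  rcases Nat.eq_zero_or_pos b with rfl | hb
  · simpa using Nat.mul_le_mul (show 2 ≤ a by omega) (show n - 2 ≤ n - 1 by omega)
  zify [show b ≤ n by omega, show 1 ≤ n - b by omega, show a ≤ n by omega,
    show 1 ≤ n - a by omega, show 2 ≤ n by omega]
  nlinarith [mul_nonneg (by omega : (0 : ℤ) ≤ a + b - 2) (by omega : (0 : ℤ) ≤ 2 * n - 4 - (a + b)),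
    sq_nonneg ((a : ℤ) - b)]

namespace K2timesKn

variable {n : ℕ}

lemma adj_iff {x y : Fin 2 × Fin n} : (K2timesKn n).Adj x y ↔ x.1 ≠ y.1 ∧ x.2 ≠ y.2 := Iff.rfl

instance : DecidableRel (K2timesKn n).Adj := fun _ _ => decidable_of_iff' _ adj_iff

lemma filter_fst_ne_zero (A : Finset (Fin 2 × Fin n)) :
    A.filter (fun v => ¬ v.1 = 0) = A.filter (·.1 = 1) :=
  filter_congr fun v _ => by generalize v.1 = c; revert c; decide

lemma card_compl_filter_fst (A : Finset (Fin 2 × Fin n)) (c : Fin 2) :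
    #(Aᶜ.filter (·.1 = c)) = n - #(A.filter (·.1 = c)) := by
  have hside : (univ : Finset (Fin 2 × Fin n)).filter (·.1 = c) = {c} ×ˢ univ := by
    ext ⟨d, j⟩; simp [eq_comm]
  have hsplit : Aᶜ.filter (·.1 = c) = univ.filter (·.1 = c) \ A.filter (·.1 = c) := by
    ext
    simp only [mem_filter, mem_compl, mem_sdiff, mem_univ, true_and, not_and]
    tauto
  rw [hsplit, card_sdiff_of_subset (filter_subset_filter _ (subset_univ A)), hside]
  simp

lemma filter_adj_eq_erase (A : Finset (Fin 2 × Fin n)) {u : Fin 2 × Fin n} {c : Fin 2}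
    (hc : c ≠ u.1) : Aᶜ.filter ((K2timesKn n).Adj u) = (Aᶜ.filter (·.1 = c)).erase (c, u.2) := by
  have hother : ∀ d : Fin 2, u.1 ≠ d ↔ d = c := by
    generalize u.1 = e at hc; revert c e; decide
  ext ⟨d, j⟩
  simp only [mem_filter, mem_compl, mem_erase, adj_iff, hother, Prod.ext_iff, ne_eq]
  grind

lemma le_sum_card_filter_adj (A : Finset (Fin 2 × Fin n)) :
    #(A.filter (·.1 = 0)) * (n - #(A.filter (·.1 = 1)) - 1) +
      #(A.filter (·.1 = 1)) * (n - #(A.filter (·.1 = 0)) - 1) ≤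
      ∑ u ∈ A, #(Aᶜ.filter ((K2timesKn n).Adj u)) := by
  have hout : ∀ u c, c ≠ u.1 →
      n - #(A.filter (·.1 = c)) - 1 ≤ #(Aᶜ.filter ((K2timesKn n).Adj u)) := by
    intro u c hc
    rw [filter_adj_eq_erase A hc, ← card_compl_filter_fst]
    exact pred_card_le_card_erase
  rw [← sum_filter_add_sum_filter_not A (·.1 = 0), filter_fst_ne_zero]
  gcongr
  · rw [← smul_eq_mul]
    exact card_nsmul_le_sum _ _ _ fun u hu => hout u 1 (by simp_all)
  · rw [← smul_eq_mul]
    exact card_nsmul_le_sum _ _ _ fun u hu => hout u 0 (by simp_all)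

lemma two_mul_sub_two_le_card (hn : 4 ≤ n) {F : Finset (Sym2 (Fin 2 × Fin n))}
    (hF : IsRestrictedEdgeCut (K2timesKn n) ↑F) : 2 * (n - 2) ≤ #F := by
  have : Nonempty (Fin n) := ⟨⟨0, by omega⟩⟩
  obtain ⟨A, hA, hAn, hcut⟩ := hF.exists_small_side
  have hsides : #(A.filter (·.1 = 0)) + #(A.filter (·.1 = 1)) = #A := by
    rw [← filter_fst_ne_zero, card_filter_add_card_filter_not]
  simp only [Fintype.card_prod, Fintype.card_fin] at hAn
  calc 2 * (n - 2)
      ≤ #(A.filter (·.1 = 0)) * (n - #(A.filter (·.1 = 1)) - 1) +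
          #(A.filter (·.1 = 1)) * (n - #(A.filter (·.1 = 0)) - 1) :=
        two_mul_sub_two_le hn (by omega) (by omega)
    _ ≤ ∑ u ∈ A, #(Aᶜ.filter ((K2timesKn n).Adj u)) := le_sum_card_filter_adj A
    _ = (cutEdges (K2timesKn n) ↑A).ncard := (ncard_cutEdges A).symm
    _ ≤ (F : Set (Sym2 (Fin 2 × Fin n))).ncard := Set.ncard_le_ncard hcut
    _ = #F := Set.ncard_coe_finset F

lemma isRestrictedEdgeCut_cutEdges_pair (hn : 4 ≤ n) {i j : Fin n} (hij : i ≠ j) :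
    IsRestrictedEdgeCut (K2timesKn n)
      (cutEdges (K2timesKn n) ↑({(0, i), (1, j)} : Finset (Fin 2 × Fin n))) := by
  refine isRestrictedEdgeCut_cutEdges (u := (0, i)) (w := (0, j)) (by simp) (by simp [hij.symm])
    fun ⟨c, k⟩ => ?_
  by_cases hx : ((c, k) : Fin 2 × Fin n) ∈ ({(0, i), (1, j)} : Finset (Fin 2 × Fin n))
  · simp only [mem_coe, mem_insert, mem_singleton, Prod.ext_iff] at hx ⊢
    rcases hx with ⟨rfl, rfl⟩ | ⟨rfl, rfl⟩
    · exact ⟨(1, j), adj_iff.2 ⟨by simp, hij⟩, by simp⟩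
    · exact ⟨(0, i), adj_iff.2 ⟨by simp, hij.symm⟩, by simp⟩
  · obtain ⟨c', hc'⟩ := exists_ne c
    obtain ⟨m, -, hm⟩ := exists_mem_notMem_of_card_lt_card (s := {k, i, j}) (t := univ)
      (by simpa using (card_le_three).trans_lt (show 3 < n by omega))
    simp only [mem_insert, mem_singleton, not_or] at hm
    refine ⟨(c', m), adj_iff.2 ⟨hc'.symm, fun h => hm.1 h.symm⟩, ?_⟩
    simp_all [Prod.ext_iff]

lemma ncard_cutEdges_pair {i j : Fin n} (hij : i ≠ j) :
    (cutEdges (K2timesKn n) ↑({(0, i), (1, j)} : Finset (Fin 2 × Fin n))).ncard = 2 * (n - 2) := by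
  set A : Finset (Fin 2 × Fin n) := {(0, i), (1, j)}
  have hout : ∀ u c, c ≠ u.1 → (c, u.2) ∉ A →
      #(Aᶜ.filter ((K2timesKn n).Adj u)) = n - #(A.filter (·.1 = c)) - 1 := by
    intro u c hc hu
    rw [filter_adj_eq_erase A hc, card_erase_of_mem (by simpa using hu), card_compl_filter_fst]
  have hside : ∀ c : Fin 2, #(A.filter (·.1 = c)) = 1 := by
    intro c
    fin_cases c <;> simp [A, filter_insert, filter_singleton]
  rw [ncard_cutEdges, sum_pair (by simp), hout (0, i) 1 (by simp) (by simp [A, hij]),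
    hout (1, j) 0 (by simp) (by simp [A, hij.symm]), hside, hside]
  omega

theorem exists_isRestrictedEdgeCut_card_eq (hn : 4 ≤ n) :
    ∃ F : Finset (Sym2 (Fin 2 × Fin n)),
      IsRestrictedEdgeCut (K2timesKn n) ↑F ∧ #F = 2 * (n - 2) := by
  have hij : (⟨0, by omega⟩ : Fin n) ≠ ⟨1, by omega⟩ := by simp
  obtain ⟨F, hF⟩ := (Set.toFinite (cutEdges (K2timesKn n)
    ↑({(0, ⟨0, by omega⟩), (1, ⟨1, by omega⟩)} : Finset (Fin 2 × Fin n)))).exists_finset_coe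
  exact ⟨F, hF ▸ isRestrictedEdgeCut_cutEdges_pair hn hij,
    by rw [← Set.ncard_coe_finset, hF, ncard_cutEdges_pair hij]⟩

end K2timesKn

theorem stmt4 (n : ℕ) (hn : 5 ≤ n) :
    restrictedEdgeConn (K2timesKn n) = ((2 * (n - 2) : ℕ) : ℕ∞) := by
  obtain ⟨F, hF, hcard⟩ := K2timesKn.exists_isRestrictedEdgeCut_card_eq (show 4 ≤ n by omega)
  refine le_antisymm (sInf_le ⟨F, hF, by rw [hcard]⟩) (le_sInf ?_)
  rintro _ ⟨F', hF', rfl⟩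
  exact_mod_cast K2timesKn.two_mul_sub_two_le_card (by omega) hF'
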